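/- arXiv:1704.08011 — 3 statements merged into one kernel-verified Lean document; each statement's English description precedes it below -/
import Mathlib

section
/- If H : Δ → ℝ satisfies generalized Shannon additivity with α = 2 and H is bounded on Δ₂, then H(p₁,p₂) = H(p₂,p₁) for all (p₁,p₂) ∈ Δ₂. -/
/-!
Put `f p = H [p, 1 - p]` and let `g p = f p - f (1 - p)` (`skewPart f`) measure the asymmetry
of `H` on `Δ₂`. Expanding `H [x, y, 1 - x - y]` in the two possible ways gives the fundamental
equation of information of degree 2 for `f`, from which `g x = (1 - x)² g (x / (1 - x))` and
`g (2x) = 2 g x`. In terms of `G r = r² g (1 / r)` (`scaledSkewPart f`) these say that `G` is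
1-periodic and additive under doubling on `[1, ∞)`. Boundedness of `H` makes `G` bounded there,
and a bounded function with `G (2r) = 2 G r` vanishes.
-/

open Real

/-- A finite stochastic vector: nonnegative entries summing to 1. -/
def IsStochastic (l : List ℝ) : Prop :=
  (∀ x ∈ l, 0 ≤ x) ∧ l.sum = 1

/-- Generalized Shannon additivity with parameter `α`: merging two adjacent
components of a stochastic vector. Powers are real powers (`rpow`). -/
def GSA (α : ℝ) (H : List ℝ → ℝ) : Prop :=
  ∀ (l₁ l₂ : List ℝ) (a b : ℝ), IsStochastic (l₁ ++ a :: b :: l₂) → 0 < a + b →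
    H (l₁ ++ a :: b :: l₂) =
      H (l₁ ++ (a + b) :: l₂) + (a + b) ^ α * H [a / (a + b), b / (a + b)]

open Set

section RealFunctions

variable {G : ℝ → ℝ} {C : ℝ}

lemma abs_le_of_abs_le_Icc_of_eq_sub_one (hper : ∀ r, 2 ≤ r → G r = G (r - 1))
    (hbase : ∀ r ∈ Icc (1 : ℝ) 2, |G r| ≤ C) : ∀ r, 1 ≤ r → |G r| ≤ C := by
  have key : ∀ n : ℕ, ∀ r : ℝ, 1 ≤ r → r ≤ n + 2 → |G r| ≤ C := by
    intro n
    induction n with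
    | zero => exact fun r h1 h2 => hbase r ⟨h1, by simpa using h2⟩
    | succ k ih =>
      intro r h1 h2
      rcases le_or_gt r (k + 2) with hr | hr
      · exact ih r h1 hr
      · rw [hper r (by linarith [(k.cast_nonneg : (0 : ℝ) ≤ k)])]
        exact ih (r - 1) (by linarith [(k.cast_nonneg : (0 : ℝ) ≤ k)])
          (by push_cast at h2; linarith)
  intro r hr
  obtain ⟨n, hn⟩ := exists_nat_ge r
  exact key n r hr (by linarith)

lemma eq_zero_of_abs_le_of_map_two_mul (hbdd : ∀ r, 1 ≤ r → |G r| ≤ C)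
    (hdouble : ∀ r, 1 ≤ r → G (2 * r) = 2 * G r) {r : ℝ} (hr : 1 ≤ r) : G r = 0 := by
  have hpow : ∀ n : ℕ, G (2 ^ n * r) = 2 ^ n * G r := by
    intro n
    induction n with
    | zero => simp
    | succ k ih =>
      rw [pow_succ', mul_assoc,
        hdouble _ (one_le_mul_of_one_le_of_one_le (one_le_pow₀ one_le_two) hr), ih, mul_assoc]
  by_contra hne
  have hpos : 0 < |G r| := abs_pos.mpr hne
  obtain ⟨n, hn⟩ := pow_unbounded_of_one_lt (C / |G r|) one_lt_two
  have hb := hbdd (2 ^ n * r) (one_le_mul_of_one_le_of_one_le (one_le_pow₀ one_le_two) hr)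
  rw [hpow, abs_mul, abs_of_pos (by positivity : (0 : ℝ) < 2 ^ n)] at hb
  rw [div_lt_iff₀ hpos] at hn
  linarith

end RealFunctions

def FundamentalEquationOfInformation (α : ℝ) (f : ℝ → ℝ) : Prop :=
  ∀ x y : ℝ, 0 ≤ x → 0 ≤ y → x + y ≤ 1 → 0 < x + y → x < 1 →
    f (x + y) + (x + y) ^ α * f (x / (x + y)) = f x + (1 - x) ^ α * f (y / (1 - x))

lemma isStochastic_triple {x y : ℝ} (hx : 0 ≤ x) (hy : 0 ≤ y) (hxy : x + y ≤ 1) :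
    IsStochastic [x, y, 1 - x - y] := by
  refine ⟨?_, by simp only [List.sum_cons, List.sum_nil]; ring⟩
  intro t ht
  simp only [List.mem_cons, List.not_mem_nil, or_false] at ht
  rcases ht with rfl | rfl | rfl <;> linarith

theorem GSA.fundamentalEquationOfInformation {α : ℝ} {H : List ℝ → ℝ} (hH : GSA α H) :
    FundamentalEquationOfInformation α (fun p => H [p, 1 - p]) := by
  intro x y hx hy hxy hxy0 hx1
  have hst := isStochastic_triple hx hy hxy
  have merge_xy := hH [] [1 - x - y] x y hst hxy0
  have merge_y := hH [x] [] y (1 - x - y) hst (by linarith)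
  simp only [List.nil_append, List.cons_append] at merge_xy merge_y
  have h1x : (1 : ℝ) - x ≠ 0 := by linarith
  rw [show 1 - x - y = 1 - (x + y) by ring, show y / (x + y) = 1 - x / (x + y) by field_simp; ring]
    at merge_xy
  rw [show y + (1 - x - y) = 1 - x by ring, show (1 - x - y) / (1 - x) = 1 - y / (1 - x) by
    field_simp, show 1 - x - y = 1 - (x + y) by ring] at merge_y
  linarith

def skewPart (f : ℝ → ℝ) (p : ℝ) : ℝ := f p - f (1 - p)

noncomputable def scaledSkewPart (f : ℝ → ℝ) (r : ℝ) : ℝ := r ^ 2 * skewPart f r⁻¹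

lemma abs_scaledSkewPart_le {f : ℝ → ℝ} {M : ℝ} (hM : ∀ p ∈ Icc (0 : ℝ) 1, |f p| ≤ M) :
    ∀ r ∈ Icc (1 : ℝ) 2, |scaledSkewPart f r| ≤ 8 * M := by
  intro r ⟨hr1, hr2⟩
  have hinv : r⁻¹ ∈ Icc (0 : ℝ) 1 := ⟨by positivity, inv_le_one_of_one_le₀ hr1⟩
  have hskew : |skewPart f r⁻¹| ≤ 2 * M := (abs_sub _ _).trans
    (by linarith [hM _ hinv, hM (1 - r⁻¹) ⟨by linarith [hinv.2], by linarith [hinv.1]⟩])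
  have hsq : r ^ 2 ≤ 4 := by nlinarith
  rw [scaledSkewPart, abs_mul, abs_of_nonneg (sq_nonneg r)]
  calc r ^ 2 * |skewPart f r⁻¹| ≤ 4 * (2 * M) :=
        mul_le_mul hsq hskew (abs_nonneg _) (by norm_num)
    _ = 8 * M := by ring

namespace FundamentalEquationOfInformation

variable {f : ℝ → ℝ} (hf : FundamentalEquationOfInformation 2 f)
include hf

lemma eq_sq {x y : ℝ} (hx : 0 ≤ x) (hy : 0 ≤ y) (hxy : x + y ≤ 1) (hxy0 : 0 < x + y)
    (hx1 : x < 1) :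
    f (x + y) + (x + y) ^ 2 * f (x / (x + y)) = f x + (1 - x) ^ 2 * f (y / (1 - x)) := by
  simpa only [Real.rpow_two] using hf x y hx hy hxy hxy0 hx1

lemma map_zero : f 0 = 0 := by
  have h := hf.eq_sq (x := 0) (y := 1 / 2) le_rfl (by norm_num) (by norm_num) (by norm_num)
    (by norm_num)
  norm_num at h
  linarith

lemma map_one : f 1 = 0 := by
  have h := hf.eq_sq (x := 1 / 2) (y := 1 / 2) (by norm_num) (by norm_num) (by norm_num)
    (by norm_num) (by norm_num)
  norm_num at h
  linarith

lemma skewPart_eq_mul_skewPart_div {x : ℝ} (hx0 : 0 ≤ x) (hx : x ≤ 1 / 2) :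
    skewPart f x = (1 - x) ^ 2 * skewPart f (x / (1 - x)) := by
  have h1x : (1 : ℝ) - x ≠ 0 := by linarith
  have h := hf.eq_sq hx0 (y := 1 - 2 * x) (by linarith) (by linarith) (by linarith) (by linarith)
  rw [show x + (1 - 2 * x) = 1 - x by ring,
    show (1 - 2 * x) / (1 - x) = 1 - x / (1 - x) by field_simp; ring] at h
  unfold skewPart
  linear_combination -h

lemma skewPart_two_mul {x : ℝ} (hx0 : 0 < x) (hx : x ≤ 1 / 2) :
    skewPart f (2 * x) = 2 * skewPart f x := by
  have h1x : (1 : ℝ) - x ≠ 0 := by linarith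
  have hxx := hf.eq_sq hx0.le hx0.le (by linarith) (by linarith) (by linarith)
  rw [show x / (x + x) = 1 / 2 by field_simp; ring, show x + x = 2 * x by ring] at hxx
  have hyx := hf.eq_sq (x := 1 - 2 * x) (y := x) (by linarith) hx0.le (by linarith) (by linarith)
    (by linarith)
  rw [show 1 - 2 * x + x = 1 - x by ring, show (1 : ℝ) - (1 - 2 * x) = 2 * x by ring,
    show x / (2 * x) = 1 / 2 by field_simp,
    show (1 - 2 * x) / (1 - x) = 1 - x / (1 - x) by field_simp; ring] at hyx
  have hskew := hf.skewPart_eq_mul_skewPart_div hx0.le hx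
  unfold skewPart at hskew ⊢
  linear_combination hxx + hyx - hskew

lemma scaledSkewPart_eq_sub_one {r : ℝ} (hr : 2 ≤ r) :
    scaledSkewPart f r = scaledSkewPart f (r - 1) := by
  have hr1 : r - 1 ≠ 0 := by linarith
  have h := hf.skewPart_eq_mul_skewPart_div (x := r⁻¹) (by positivity)
    (by rw [inv_le_comm₀ (by linarith) (by norm_num)]; linarith)
  rw [show r⁻¹ / (1 - r⁻¹) = (r - 1)⁻¹ by field_simp] at h
  unfold scaledSkewPart
  rw [h]
  field_simp

lemma scaledSkewPart_two_mul {r : ℝ} (hr : 1 ≤ r) :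
    scaledSkewPart f (2 * r) = 2 * scaledSkewPart f r := by
  have h := hf.skewPart_two_mul (x := (2 * r)⁻¹) (by positivity)
    (by rw [inv_le_comm₀ (by linarith) (by norm_num)]; linarith)
  rw [show 2 * (2 * r)⁻¹ = r⁻¹ by field_simp] at h
  unfold scaledSkewPart
  rw [h]
  ring

lemma skewPart_eq_zero (hbdd : ∃ M, ∀ p ∈ Icc (0 : ℝ) 1, |f p| ≤ M) {p : ℝ}
    (hp : p ∈ Icc (0 : ℝ) 1) :
    skewPart f p = 0 := by
  obtain ⟨M, hM⟩ := hbdd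
  rcases hp.1.eq_or_lt with rfl | hp0
  · simp [skewPart, hf.map_zero, hf.map_one]
  have h := eq_zero_of_abs_le_of_map_two_mul
    (abs_le_of_abs_le_Icc_of_eq_sub_one (fun r hr => hf.scaledSkewPart_eq_sub_one hr)
      (abs_scaledSkewPart_le hM))
    (fun r hr => hf.scaledSkewPart_two_mul hr) (one_le_inv₀ hp0 |>.mpr hp.2)
  rw [scaledSkewPart, inv_inv] at h
  exact (mul_eq_zero.mp h).resolve_left (by positivity)

end FundamentalEquationOfInformation

theorem stmt_10 (H : List ℝ → ℝ) (hH : GSA 2 H)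
    (hbdd : ∃ M : ℝ, ∀ p ∈ Set.Icc (0 : ℝ) 1, |H [p, 1 - p]| ≤ M)
    (p₁ p₂ : ℝ) (h₁ : 0 ≤ p₁) (h₂ : 0 ≤ p₂) (hsum : p₁ + p₂ = 1) :
    H [p₁, p₂] = H [p₂, p₁] := by
  obtain rfl : p₂ = 1 - p₁ := by linarith
  have h := hH.fundamentalEquationOfInformation.skewPart_eq_zero hbdd ⟨h₁, by linarith⟩
  rw [skewPart, sub_sub_cancel, sub_eq_zero] at h
  exact h
end

section
/- If H : Δ → ℝ satisfies generalized Shannon additivity with α = 2 and H is bounded on Δ₂, then H(p₁,p₂) = 2·H(1/2,1/2)·(1 − p₁² − p₂²) for all (p₁,p₂) ∈ Δ₂. -/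
open Real

lemma rp2 (x : ℝ) : x ^ (2:ℝ) = x ^ 2 := by
  rw [show (2:ℝ) = ((2:ℕ):ℝ) by norm_num, Real.rpow_natCast]
variable {H : List ℝ → ℝ}
lemma merge3_12 (hH : GSA 2 H) {a b c : ℝ} (ha : 0 ≤ a) (hb : 0 ≤ b) (hc : 0 ≤ c)
    (hsum : a + b + c = 1) (hab : 0 < a + b) :
    H [a, b, c] = H [a + b, c] + (a + b) ^ 2 * H [a / (a + b), b / (a + b)] := by
  have h := hH [] [c] a b ⟨by intro x hx; simp at hx; rcases hx with h|h|h <;> subst h <;> assumption,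
    by simp; linarith⟩ hab
  simpa [rp2] using h
lemma merge3_23 (hH : GSA 2 H) {a b c : ℝ} (ha : 0 ≤ a) (hb : 0 ≤ b) (hc : 0 ≤ c)
    (hsum : a + b + c = 1) (hbc : 0 < b + c) :
    H [a, b, c] = H [a, b + c] + (b + c) ^ 2 * H [b / (b + c), c / (b + c)] := by
  have h := hH [a] [] b c ⟨by intro x hx; simp at hx; rcases hx with h|h|h <;> subst h <;> assumption,
    by simp; linarith⟩ hbc
  simpa [rp2] using h
lemma merge4_12 (hH : GSA 2 H) {a b c d : ℝ} (ha : 0 ≤ a) (hb : 0 ≤ b) (hc : 0 ≤ c) (hd : 0 ≤ d)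
    (hsum : a + b + c + d = 1) (hab : 0 < a + b) :
    H [a, b, c, d] = H [a + b, c, d] + (a + b) ^ 2 * H [a / (a + b), b / (a + b)] := by
  have h := hH [] [c, d] a b ⟨by intro x hx; simp at hx; rcases hx with h|h|h|h <;> subst h <;> assumption,
    by simp; linarith⟩ hab
  simpa [rp2] using h
lemma merge4_23 (hH : GSA 2 H) {a b c d : ℝ} (ha : 0 ≤ a) (hb : 0 ≤ b) (hc : 0 ≤ c) (hd : 0 ≤ d)
    (hsum : a + b + c + d = 1) (hbc : 0 < b + c) :
    H [a, b, c, d] = H [a, b + c, d] + (b + c) ^ 2 * H [b / (b + c), c / (b + c)] := by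
  have h := hH [a] [d] b c ⟨by intro x hx; simp at hx; rcases hx with h|h|h|h <;> subst h <;> assumption,
    by simp; linarith⟩ hbc
  simpa [rp2] using h

/-- `g x = H [x, 1-x]` -/
def gg (H : List ℝ → ℝ) (x : ℝ) : ℝ := H [x, 1 - x]
/-- `ḡ x = H [1-x, x]` -/
def hg (H : List ℝ → ℝ) (x : ℝ) : ℝ := H [1 - x, x]

lemma key1 (hH : GSA 2 H) {s t : ℝ} (hs : 0 < s) (hs1 : s < 1) (ht : 0 < t) (ht1 : t < 1) :
    gg H s + s ^ 2 * hg H t + (1 - s) ^ 2 * gg H t =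
      gg H (s + t - s * t)
        + (s + t - s * t) ^ 2 * H [s * (1 - t) / (s + t - s * t), t / (s + t - s * t)]
        + t ^ 2 * gg H s := by
  have h1s : (0:ℝ) < 1 - s := by linarith
  have h1t : (0:ℝ) < 1 - t := by linarith
  have hQ : (0:ℝ) < s + t - s * t := by nlinarith
  have e1 := merge4_12 hH (a := s*(1-t)) (b := s*t) (c := (1-s)*t) (d := (1-s)*(1-t))
    (by positivity) (by positivity) (by positivity) (by positivity) (by ring) (by nlinarith)
  rw [show s*(1-t) + s*t = s by ring, mul_div_cancel_left₀ (1-t) hs.ne',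
    mul_div_cancel_left₀ t hs.ne'] at e1
  have e2 := merge3_23 hH (a := s) (b := (1-s)*t) (c := (1-s)*(1-t))
    (le_of_lt hs) (by positivity) (by positivity) (by ring) (by nlinarith)
  rw [show (1-s)*t + (1-s)*(1-t) = 1 - s by ring, mul_div_cancel_left₀ t h1s.ne',
    mul_div_cancel_left₀ (1-t) h1s.ne'] at e2
  have e3 := merge4_23 hH (a := s*(1-t)) (b := s*t) (c := (1-s)*t) (d := (1-s)*(1-t))
    (by positivity) (by positivity) (by positivity) (by positivity) (by ring) (by nlinarith)
  rw [show s*t + (1-s)*t = t by ring, mul_div_cancel_right₀ s ht.ne',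
    mul_div_cancel_right₀ (1-s) ht.ne'] at e3
  have e4 := merge3_12 hH (a := s*(1-t)) (b := t) (c := (1-s)*(1-t))
    (by positivity) (le_of_lt ht) (by positivity) (by ring) (by nlinarith)
  rw [show s*(1-t) + t = s + t - s*t by ring] at e4
  rw [show (1-s)*(1-t) = 1 - (s + t - s*t) by ring] at e1 e2 e3 e4
  simp only [gg, hg]
  linear_combination e3 + e4 - e1 - e2

lemma key2 (hH : GSA 2 H) {s t : ℝ} (hs : 0 < s) (hs1 : s < 1) (ht : 0 < t) (ht1 : t < 1) :
    hg H t + (1 - t) ^ 2 * hg H s =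
      hg H (s + t - s * t)
        + (s + t - s * t) ^ 2 * H [s * (1 - t) / (s + t - s * t), t / (s + t - s * t)] := by
  have h1s : (0:ℝ) < 1 - s := by linarith
  have h1t : (0:ℝ) < 1 - t := by linarith
  have hQ : (0:ℝ) < s + t - s * t := by nlinarith
  have f1 := merge3_12 hH (a := (1-t)*(1-s)) (b := s*(1-t)) (c := t)
    (by positivity) (by positivity) (le_of_lt ht) (by ring) (by nlinarith)
  rw [show (1-t)*(1-s) + s*(1-t) = 1 - t by ring, mul_div_cancel_left₀ (1-s) h1t.ne'] at f1
  rw [show s*(1-t)/(1-t) = s from mul_div_cancel_right₀ s h1t.ne'] at f1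
  have f2 := merge3_23 hH (a := (1-t)*(1-s)) (b := s*(1-t)) (c := t)
    (by positivity) (by positivity) (le_of_lt ht) (by ring) (by nlinarith)
  rw [show s*(1-t) + t = s + t - s*t by ring] at f2
  rw [show (1-t)*(1-s) = 1 - (s + t - s*t) by ring] at f1 f2
  simp only [gg, hg]
  linear_combination f2 - f1

/-- antisymmetric part -/
def DD (H : List ℝ → ℝ) (x : ℝ) : ℝ := gg H x - hg H x
/-- Cauchy function -/
noncomputable def EE (H : List ℝ → ℝ) (ξ : ℝ) : ℝ := DD H (1 - ξ) / ξ

lemma keyG (hH : GSA 2 H) {s t : ℝ} (hs : 0 < s) (hs1 : s < 1) (ht : 0 < t) (ht1 : t < 1) :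
    (1 - t^2) * gg H s - (1 - s^2) * hg H t + (1 - s)^2 * gg H t - (1 - t)^2 * hg H s
      = DD H (s + t - s * t) := by
  have k1 := key1 hH hs hs1 ht ht1
  have k2 := key2 hH hs hs1 ht ht1
  simp only [DD]
  linear_combination k1 - k2

lemma keyDD (hH : GSA 2 H) {s t : ℝ} (hs : 0 < s) (hs1 : s < 1) (ht : 0 < t) (ht1 : t < 1) :
    (1 - t) * DD H s + (1 - s) * DD H t = DD H (s + t - s * t) := by
  have h1 := keyG hH hs hs1 ht ht1
  have h2 := keyG hH ht ht1 hs hs1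
  rw [show t + s - t * s = s + t - s * t by ring] at h2
  simp only [DD] at *
  linear_combination (h1 + h2) / 2

lemma symS (hH : GSA 2 H) {s t : ℝ} (hs : 0 < s) (hs1 : s < 1) (ht : 0 < t) (ht1 : t < 1) :
    2 * t * (1 - t) * (gg H s + hg H s) = 2 * s * (1 - s) * (gg H t + hg H t) := by
  have h1 := keyG hH hs hs1 ht ht1
  have h2 := keyG hH ht ht1 hs hs1
  rw [show t + s - t * s = s + t - s * t by ring] at h2
  linear_combination h1 - h2

lemma EEmul (hH : GSA 2 H) {ξ η : ℝ} (hξ : 0 < ξ) (hξ1 : ξ < 1) (hη : 0 < η) (hη1 : η < 1) :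
    EE H (ξ * η) = EE H ξ + EE H η := by
  have h := keyDD hH (s := 1 - ξ) (t := 1 - η) (by linarith) (by linarith) (by linarith) (by linarith)
  rw [show (1 - ξ) + (1 - η) - (1 - ξ) * (1 - η) = 1 - ξ * η by ring,
    show 1 - (1 - η) = η by ring, show 1 - (1 - ξ) = ξ by ring] at h
  simp only [EE]
  rw [← h]
  field_simp

lemma hg_eq (x : ℝ) : hg H x = gg H (1 - x) := by simp [gg, hg]

lemma Ehalf : EE H (1/2) = 0 := by
  have h : (1:ℝ) - 1/2 = 1/2 := by norm_num
  simp only [EE, DD, h, gg, hg]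
  simp

section Bound
variable {M : ℝ} (hM : ∀ p ∈ Set.Icc (0:ℝ) 1, |H [p, 1 - p]| ≤ M)

include hM in
lemma Dbound {x : ℝ} (h0 : 0 ≤ x) (h1 : x ≤ 1) : |DD H x| ≤ 2 * M := by
  have b1 : |gg H x| ≤ M := hM x ⟨h0, h1⟩
  have b2 : |gg H (1 - x)| ≤ M := hM (1 - x) ⟨by linarith, by linarith⟩
  rw [DD, hg_eq]
  calc |gg H x - gg H (1 - x)| ≤ |gg H x| + |gg H (1 - x)| := abs_sub _ _
    _ ≤ 2 * M := by linarith

include hM in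
lemma Ebound_big {ξ : ℝ} (h0 : 1/2 ≤ ξ) (h1 : ξ < 1) : |EE H ξ| ≤ 4 * M := by
  have hD : |DD H (1 - ξ)| ≤ 2 * M := Dbound hM (by linarith) (by linarith)
  have hξ : (0:ℝ) < ξ := by linarith
  rw [EE, abs_div, abs_of_pos hξ, div_le_iff₀ hξ]
  nlinarith [abs_nonneg (DD H (1 - ξ))]

include hM in
lemma Ebound (hH : GSA 2 H) {ξ : ℝ} (h0 : 0 < ξ) (h1 : ξ < 1) : |EE H ξ| ≤ 4 * M := by
  have key : ∀ n : ℕ, ∀ ξ : ℝ, 0 < ξ → ξ < 1 → (1/2:ℝ)^n ≤ ξ → |EE H ξ| ≤ 4 * M := by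
    intro n
    induction n with
    | zero => intro ξ h0 h1 hle; simp at hle; linarith
    | succ n ih =>
      intro ξ h0 h1 hle
      by_cases hc : 1/2 ≤ ξ
      · exact Ebound_big hM hc h1
      · push_neg at hc
        have h2 : EE H (2*ξ * (1/2)) = EE H (2*ξ) + EE H (1/2) :=
          EEmul hH (by linarith) (by linarith) (by norm_num) (by norm_num)
        rw [show 2*ξ*(1/2:ℝ) = ξ by ring, Ehalf, add_zero] at h2
        rw [h2]
        exact ih (2*ξ) (by linarith) (by linarith)
          (by rw [pow_succ] at hle; nlinarith [pow_nonneg (by norm_num : (0:ℝ) ≤ 1/2) n])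
  obtain ⟨n, hn⟩ := exists_pow_lt_of_lt_one h0 (by norm_num : (1/2:ℝ) < 1)
  exact key n ξ h0 h1 (le_of_lt hn)

include hM in
lemma Ezero (hH : GSA 2 H) {ξ : ℝ} (h0 : 0 < ξ) (h1 : ξ < 1) : EE H ξ = 0 := by
  have key : ∀ n : ℕ, ∀ ξ : ℝ, 0 < ξ → ξ < 1 → |EE H ξ| ≤ 4 * M / 2^n := by
    intro n
    induction n with
    | zero => intro ξ h0 h1; simpa using Ebound hM hH h0 h1
    | succ n ih =>
      intro ξ h0 h1
      have h2 : EE H (ξ * ξ) = EE H ξ + EE H ξ := EEmul hH h0 h1 h0 h1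
      have h3 : |EE H (ξ*ξ)| ≤ 4 * M / 2^n := ih (ξ*ξ) (by positivity) (by nlinarith)
      rw [h2, show EE H ξ + EE H ξ = 2 * EE H ξ by ring, abs_mul, abs_two] at h3
      rw [pow_succ, ← div_div]
      linarith
  have hM0 : 0 ≤ M := le_trans (abs_nonneg _) (hM 0 (by norm_num))
  by_contra hne
  have hpos : 0 < |EE H ξ| := abs_pos.mpr hne
  obtain ⟨n, hn⟩ := pow_unbounded_of_one_lt (4 * M / |EE H ξ|) (by norm_num : (1:ℝ) < 2)
  have h4 := key n ξ h0 h1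
  rw [div_lt_iff₀ hpos] at hn
  have hp : (0:ℝ) < 2^n := by positivity
  rw [le_div_iff₀ hp] at h4
  nlinarith

include hM in
lemma Dzero (hH : GSA 2 H) {x : ℝ} (h0 : 0 < x) (h1 : x < 1) : DD H x = 0 := by
  have h := Ezero hM hH (ξ := 1 - x) (by linarith) (by linarith)
  rw [EE, show (1:ℝ) - (1 - x) = x by ring, div_eq_zero_iff] at h
  rcases h with h | h
  · exact h
  · linarith

include hM in
lemma gval (hH : GSA 2 H) {s : ℝ} (h0 : 0 < s) (h1 : s < 1) :
    gg H s = 4 * s * (1 - s) * gg H (1/2) := by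
  have hsym := symS hH h0 h1 (t := 1/2) (by norm_num) (by norm_num)
  have hgh : hg H (1/2) = gg H (1/2) := by rw [hg_eq]; norm_num
  have hD : gg H s - hg H s = 0 := Dzero hM hH h0 h1
  rw [hgh] at hsym
  nlinarith [hsym, hD]

end Bound

lemma Hzero (hH : GSA 2 H) : H [0, 1] = 0 := by
  have e1 := merge3_12 hH (a := 0) (b := 1/2) (c := 1/2)
    (le_refl 0) (by norm_num) (by norm_num) (by norm_num) (by norm_num)
  have e2 := merge3_23 hH (a := 0) (b := 1/2) (c := 1/2)
    (le_refl 0) (by norm_num) (by norm_num) (by norm_num) (by norm_num)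
  norm_num at e1 e2
  linarith

lemma Hone (hH : GSA 2 H) : H [1, 0] = 0 := by
  have e1 := merge3_12 hH (a := 1/2) (b := 1/2) (c := 0)
    (by norm_num) (by norm_num) (le_refl 0) (by norm_num) (by norm_num)
  have e2 := merge3_23 hH (a := 1/2) (b := 1/2) (c := 0)
    (by norm_num) (by norm_num) (le_refl 0) (by norm_num) (by norm_num)
  norm_num at e1 e2
  linarith

theorem stmt_11 (H : List ℝ → ℝ) (hH : GSA 2 H)
    (hbdd : ∃ M : ℝ, ∀ p ∈ Set.Icc (0 : ℝ) 1, |H [p, 1 - p]| ≤ M)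
    (p₁ p₂ : ℝ) (h₁ : 0 ≤ p₁) (h₂ : 0 ≤ p₂) (hsum : p₁ + p₂ = 1) :
    H [p₁, p₂] = 2 * H [1/2, 1/2] * (1 - p₁ ^ 2 - p₂ ^ 2) := by
  obtain ⟨M, hM⟩ := hbdd
  have hp2 : p₂ = 1 - p₁ := by linarith
  subst hp2
  rcases eq_or_lt_of_le h₁ with h0 | h0
  · -- p₁ = 0
    rw [← h0, show (1:ℝ) - 0 = 1 by norm_num, Hzero hH]
    norm_num
  rcases eq_or_lt_of_le (show p₁ ≤ 1 by linarith) with h1 | h1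
  · -- p₁ = 1
    rw [h1, show (1:ℝ) - 1 = 0 by norm_num, Hone hH]
    norm_num
  · have hg1 := gval hM hH h0 h1
    have hhalf : gg H (1/2) = H [1/2, 1/2] := by rw [gg]; norm_num
    rw [hhalf] at hg1
    rw [show H [p₁, 1 - p₁] = gg H p₁ from rfl, hg1]
    ring
end

section
/- If H : Δ → ℝ satisfies generalized Shannon additivity with parameter α > 0, α ≠ 1, α ≠ 2, then H(p₁,...,pₙ) = H(1/2,1/2)·(1 − Σᵢ pᵢ^α)/(1 − 2^{1−α}) for all n and all (p₁,...,pₙ) ∈ Δₙ; i.e., H is a scalar multiple of the Tsallis entropy. -/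
/-!
Subtracting `H [1/2, 1/2]` times the Tsallis entropy, which is itself additive, leaves an additive
`D` with `D [1/2, 1/2] = 0`, and it suffices to show that such a `D` vanishes. Merging adjacent
entries `a, b` changes `D` by `F a b := (a + b) ^ α * D [a / (a + b), b / (a + b)]`, which is
homogeneous of degree `α`; merging a three-entry vector in the two possible orders shows that `F`
is a cocycle, `F (x + y) z + F x y = F x (y + z) + F y z`. Four instances of this identity give
`F y x = (3 - 2 ^ α) * F x y` for `x, y > 0`, so `F` vanishes there unless `(3 - 2 ^ α) ^ 2 = 1`,
i.e. `α ∈ {1, 2}`; on the boundary, `F 0 y = 2 ^ α * F 0 y` forces `F 0 y = 0` for `α ≠ 0`.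
Hence merging never changes `D`, and `D l = D [1] = 0`.
-/

open Real

theorem List.exists_eq_append_cons_cons_add_pos {l : List ℝ} (hnn : ∀ x ∈ l, 0 ≤ x)
    (hsum : 0 < l.sum) (hlen : 2 ≤ l.length) :
    ∃ l₁ a b l₂, l = l₁ ++ a :: b :: l₂ ∧ 0 < a + b := by
  obtain ⟨x, hx, hx0 : 0 < x⟩ := List.exists_lt_of_sum_lt (l := l) (fun _ => (0 : ℝ)) id
    (by simpa using hsum)
  obtain ⟨s, t, rfl⟩ := List.append_of_mem hx
  rcases t with _ | ⟨b, t⟩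
  · rcases List.eq_nil_or_concat' s with rfl | ⟨s, w, rfl⟩
    · simp at hlen
    · exact ⟨s, w, x, [], by simp, by linarith [hnn w (by simp)]⟩
  · exact ⟨s, x, b, t, rfl, by linarith [hnn b (by simp)]⟩

theorem IsStochastic.merge {l₁ l₂ : List ℝ} {a b : ℝ} (h : IsStochastic (l₁ ++ a :: b :: l₂)) :
    IsStochastic (l₁ ++ (a + b) :: l₂) := by
  obtain ⟨hnn, hsum⟩ := h
  refine ⟨fun x hx => ?_, by simpa [add_assoc] using hsum⟩
  simp only [List.mem_append, List.mem_cons] at hx hnn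
  rcases hx with hx | rfl | hx
  · exact hnn x (.inl hx)
  · exact add_nonneg (hnn _ (.inr (.inl rfl))) (hnn _ (.inr (.inr (.inl rfl))))
  · exact hnn x (.inr (.inr (.inr hx)))

noncomputable def tsallis (α : ℝ) (l : List ℝ) : ℝ :=
  (1 - (l.map fun p => p ^ α).sum) / (1 - 2 ^ (1 - α))

theorem tsallis_half_half {α : ℝ} (hα : α ≠ 1) : tsallis α [1/2, 1/2] = 1 := by
  have hκ : (1 : ℝ) - 2 ^ (1 - α) ≠ 0 := by
    rw [sub_ne_zero, ne_comm, ← rpow_zero 2, Ne, rpow_right_inj two_pos (by norm_num)]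
    contrapose! hα
    linarith
  rw [tsallis, div_eq_one_iff_eq hκ, rpow_sub two_pos, rpow_one]
  simp only [List.map_cons, List.map_nil, List.sum_cons, List.sum_nil, one_div,
    inv_rpow zero_le_two]
  ring

theorem gsa_tsallis (α : ℝ) : GSA α (tsallis α) := by
  intro l₁ l₂ a b hs hab
  have ha : 0 ≤ a := hs.1 a (by simp)
  have hb : 0 ≤ b := hs.1 b (by simp)
  have : (a + b) ^ α ≠ 0 := (rpow_pos_of_pos hab α).ne'
  simp only [tsallis, List.map_append, List.map_cons, List.map_nil, List.sum_append,
    List.sum_cons, List.sum_nil, div_rpow ha hab.le, div_rpow hb hab.le]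
  field_simp
  ring

noncomputable def homBinary (α : ℝ) (D : List ℝ → ℝ) (x y : ℝ) : ℝ :=
  (x + y) ^ α * D [x / (x + y), y / (x + y)]

theorem homBinary_of_add_eq_one (α : ℝ) (D : List ℝ → ℝ) {x y : ℝ} (h : x + y = 1) :
    homBinary α D x y = D [x, y] := by
  rw [homBinary, h, one_rpow, div_one, div_one, one_mul]

theorem homBinary_mul_mul (α : ℝ) (D : List ℝ → ℝ) {c x y : ℝ} (hc : 0 < c)
    (hxy : 0 ≤ x + y) : homBinary α D (c * x) (c * y) = c ^ α * homBinary α D x y := by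
  rw [homBinary, homBinary, ← mul_add, mul_rpow hc.le hxy, mul_div_mul_left _ _ hc.ne',
    mul_div_mul_left _ _ hc.ne', mul_assoc]

namespace GSA

variable {α : ℝ} {D K : List ℝ → ℝ}

theorem sub (hD : GSA α D) (hK : GSA α K) : GSA α fun l => D l - K l := by
  intro l₁ l₂ a b hs hab
  simp only [hD l₁ l₂ a b hs hab, hK l₁ l₂ a b hs hab]
  ring

theorem const_mul (c : ℝ) (hD : GSA α D) : GSA α fun l => c * D l := by
  intro l₁ l₂ a b hs hab
  simp only [hD l₁ l₂ a b hs hab]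
  ring

theorem apply_one (hD : GSA α D) : D [1] = 0 := by
  have h := hD [] [] 1 0 ⟨by simp, by simp⟩ (by norm_num)
  norm_num at h
  exact h

theorem homBinary_cocycle (hD : GSA α D) {x y z : ℝ} (hx : 0 ≤ x) (hy : 0 ≤ y) (hz : 0 ≤ z)
    (hxy : 0 < x + y) (hyz : 0 < y + z) :
    homBinary α D (x + y) z + homBinary α D x y =
      homBinary α D x (y + z) + homBinary α D y z := by
  set s := x + y + z
  have hs : 0 < s := by positivity
  have hst : IsStochastic [x / s, y / s, z / s] := by
    refine ⟨fun t ht => ?_, ?_⟩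
    · simp only [List.mem_cons, List.not_mem_nil, or_false] at ht
      rcases ht with rfl | rfl | rfl <;> positivity
    simp only [List.sum_cons, List.sum_nil]
    field_simp
    ring
  have e₁ : D [x / s, y / s, z / s] =
      homBinary α D ((x + y) / s) (z / s) + homBinary α D (x / s) (y / s) := by
    rw [homBinary_of_add_eq_one α D (by rw [← add_div]; exact div_self hs.ne'), add_div]
    exact hD [] [z / s] (x / s) (y / s) hst (by rw [← add_div]; positivity)
  have e₂ : D [x / s, y / s, z / s] =
      homBinary α D (x / s) ((y + z) / s) + homBinary α D (y / s) (z / s) := by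
    rw [homBinary_of_add_eq_one α D (by rw [← add_div, ← add_assoc]; exact div_self hs.ne'),
      add_div]
    exact hD [x / s] [] (y / s) (z / s) hst (by rw [← add_div]; positivity)
  have hom (u v : ℝ) (huv : 0 ≤ u + v) :
      homBinary α D (u / s) (v / s) = s⁻¹ ^ α * homBinary α D u v := by
    simp only [div_eq_inv_mul]
    exact homBinary_mul_mul α D (inv_pos.2 hs) huv
  have e := e₁.symm.trans e₂
  rw [hom _ _ (by positivity), hom _ _ hxy.le, hom _ _ (by positivity), hom _ _ hyz.le,
    ← mul_add, ← mul_add] at e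
  exact mul_left_cancel₀ (rpow_pos_of_pos (inv_pos.2 hs) α).ne' e

theorem homBinary_swap (hD : GSA α D) (hhalf : D [1/2, 1/2] = 0) {x y : ℝ} (hx : 0 < x)
    (hy : 0 < y) : homBinary α D y x = (3 - 2 ^ α) * homBinary α D x y := by
  have hdiag {t : ℝ} (ht : 0 < t) : homBinary α D t t = 0 := by
    rw [homBinary, show t / (t + t) = 1 / 2 by field_simp; ring, hhalf, mul_zero]
  have hdouble : homBinary α D (2 * x) (2 * y) = 2 ^ α * homBinary α D x y :=
    homBinary_mul_mul α D two_pos (by positivity)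
  have e₁ := hD.homBinary_cocycle hy.le hx.le hy.le (by positivity) (by positivity)
  have e₂ := hD.homBinary_cocycle hx.le hy.le hy.le (by positivity) (by positivity)
  have e₃ := hD.homBinary_cocycle hx.le hy.le (z := x + y) (by positivity) (by positivity)
    (by positivity)
  have e₄ := hD.homBinary_cocycle hx.le hx.le (z := 2 * y) (by positivity) (by positivity)
    (by positivity)
  rw [add_comm y x] at e₁
  rw [← two_mul] at e₂ e₄
  rw [show y + (x + y) = x + 2 * y by ring] at e₃
  linear_combination e₁ - e₂ - e₃ + e₄ - hdouble - hdiag hx - hdiag hy + hdiag (add_pos hx hy)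

theorem homBinary_eq_zero (hα0 : α ≠ 0) (hα1 : α ≠ 1) (hα2 : α ≠ 2) (hD : GSA α D)
    (hhalf : D [1/2, 1/2] = 0) {x y : ℝ} (hx : 0 ≤ x) (hy : 0 ≤ y) (hxy : 0 < x + y) :
    homBinary α D x y = 0 := by
  have hpow {β : ℝ} (h : α ≠ β) : (2 : ℝ) ^ α - 2 ^ β ≠ 0 :=
    sub_ne_zero.2 fun h' => h ((rpow_right_inj two_pos (by norm_num)).1 h')
  have hpow0 : (2 : ℝ) ^ α - 1 ≠ 0 := by simpa using hpow hα0
  rcases hx.eq_or_lt with rfl | hx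
  · have hdouble := homBinary_mul_mul α D two_pos (x := 0) hxy.le
    have e := hD.homBinary_cocycle le_rfl hy hy hxy (by linarith)
    rw [mul_zero] at hdouble
    rw [zero_add, ← two_mul, hdouble] at e
    exact (mul_eq_zero.1 (by linear_combination -e : (2 ^ α - 1) * homBinary α D 0 y = 0)
      ).resolve_left hpow0
  rcases hy.eq_or_lt with rfl | hy
  · have hdouble := homBinary_mul_mul α D two_pos (y := 0) hxy.le
    have e := hD.homBinary_cocycle hx.le hx.le le_rfl (by positivity) (by positivity)
    rw [mul_zero] at hdouble
    rw [add_zero, ← two_mul, hdouble] at e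
    exact (mul_eq_zero.1 (by linear_combination e : (2 ^ α - 1) * homBinary α D x 0 = 0)
      ).resolve_left hpow0
  have e₁ := hD.homBinary_swap hhalf hx hy
  have e₂ := hD.homBinary_swap hhalf hy hx
  have hfactor : ((2 : ℝ) ^ α - 2 ^ (1 : ℝ)) * (2 ^ α - 2 ^ (2 : ℝ)) ≠ 0 :=
    mul_ne_zero (hpow hα1) (hpow hα2)
  rw [rpow_one, rpow_two] at hfactor
  refine (mul_eq_zero.1 ?_).resolve_left hfactor
  linear_combination -(3 - 2 ^ α) * e₁ - e₂

theorem eq_zero_of_apply_half (hα0 : α ≠ 0) (hα1 : α ≠ 1) (hα2 : α ≠ 2) (hD : GSA α D)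
    (hhalf : D [1/2, 1/2] = 0) {l : List ℝ} (hl : IsStochastic l) : D l = 0 := by
  induction hn : l.length using Nat.strong_induction_on generalizing l with
  | _ n ih =>
  rcases l with _ | ⟨a, _ | ⟨_, _⟩⟩
  · simp [IsStochastic] at hl
  · obtain rfl : a = 1 := by simpa using hl.2
    exact hD.apply_one
  · obtain ⟨l₁, a, b, l₂, hsplit, hab⟩ := List.exists_eq_append_cons_cons_add_pos hl.1
      (by rw [hl.2]; exact one_pos) (by simp)
    rw [hsplit] at hl hn ⊢
    have hshorter : (l₁ ++ (a + b) :: l₂).length < n := by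
      subst hn
      simp
    rw [hD l₁ l₂ a b hl hab, ih _ hshorter hl.merge rfl, zero_add]
    exact hD.homBinary_eq_zero hα0 hα1 hα2 hhalf (hl.1 a (by simp)) (hl.1 b (by simp)) hab

end GSA

theorem stmt_13 (α : ℝ) (hα : 0 < α) (hα1 : α ≠ 1) (hα2 : α ≠ 2)
    (H : List ℝ → ℝ) (hH : GSA α H)
    (l : List ℝ) (hl : IsStochastic l) :
    H l = H [1/2, 1/2] * (1 - (l.map fun p => p ^ α).sum) / (1 - (2 : ℝ) ^ (1 - α)) := by
  have hD := hH.sub ((gsa_tsallis α).const_mul (H [1/2, 1/2]))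
  have hhalf : H [1/2, 1/2] - H [1/2, 1/2] * tsallis α [1/2, 1/2] = 0 := by
    rw [tsallis_half_half hα1, mul_one, sub_self]
  rw [mul_div_assoc, ← sub_eq_zero]
  exact hD.eq_zero_of_apply_half hα.ne' hα1 hα2 hhalf hl
end
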